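/- For odd n ≥ 3, the function F_n(h) := Σ_{k=0}^{h} ((C(n,k) - C(n,k-1))/C(n,h)) · ((n-k-h)/(n-2k)) is strictly decreasing in h on {0, 1, …, (n-1)/2}. -/

import Mathlib

/-- Binomial coefficient `C(n, j)` with integer lower index, with the
convention `C(n, j) = 0` for `j < 0`, valued in `ℚ`. -/
def ch (n : ℕ) (j : ℤ) : ℚ := if j < 0 then 0 else (n.choose j.toNat : ℚ)

/-- The optimal fidelity of `n`-qubit quantum majority vote on inputs of
Hamming weight `h`. -/
def Fid (n h : ℕ) : ℚ :=
  ∑ k ∈ Finset.range (h + 1),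
    ((ch n k - ch n ((k : ℤ) - 1)) / (n.choose h : ℚ))
      * (((n : ℚ) - k - h) / ((n : ℚ) - 2 * k))

/-!
Summation by parts, using `C(n,k) - C(n,k-1)` as the increments, turns the sum into
`C(n,h) · F_n(h) = C(n,h) - (n - 2h) · T(h)` with `T(h) = ∑_{k<h} C(n,k) / ((n-2k)(n-2k-2))`.
With `N = n - 2h` and `A = N² - N + 2h + 2`, the difference `F_n(h) - F_n(h+1)` is a positive
multiple of `(h+1) C(n,h) - N A T(h)`, so it suffices that `T(h) < U(h) := (h+1) C(n,h) / (N A)`.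
This holds for `h = 0` since `T(0) = 0`, and it propagates because `U` grows faster than `T`:
`U(h+1) - U(h) - C(n,h) / (N(N-2))` is `C(n,h)` times a polynomial in `N, h` that is nonnegative
for `N > 2`, divided by a positive denominator.
-/

open Finset

@[simp]
lemma ch_natCast (n k : ℕ) : ch n k = n.choose k := by simp [ch]

@[simp]
lemma ch_neg_one (n : ℕ) : ch n (-1) = 0 := by simp [ch]

lemma sum_range_ch_sub (n i : ℕ) :
    ∑ k ∈ range (i + 1), (ch n k - ch n ((k : ℤ) - 1)) = n.choose i := by
  simpa using sum_range_sub (fun k : ℕ => ch n ((k : ℤ) - 1)) (i + 1)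

lemma cast_choose_succ_right (n h : ℕ) (hh : h ≤ n) :
    (n.choose (h + 1) : ℚ) = n.choose h * ((n : ℚ) - h) / ((h : ℚ) + 1) := by
  rw [eq_div_iff (by positivity)]
  have := congrArg (Nat.cast : ℕ → ℚ) (Nat.choose_succ_right_eq n h)
  push_cast [Nat.cast_sub hh] at this
  linear_combination this

lemma lt_sub_two_mul_of_lt {n h m : ℕ} (hh : 2 * h + m < n) : (m : ℚ) < n - 2 * h := by
  have : ((2 * h + m : ℕ) : ℚ) < n := by exact_mod_cast hh
  push_cast at this
  linarith

lemma quartic_nonneg {x N : ℚ} (hx : 0 ≤ x) (hN : 2 < N) :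
    0 ≤ N ^ 4 + 3 * N ^ 3 - 6 * N ^ 2 + 5 * x * N ^ 3 - 3 * x * N ^ 2 - 6 * x * N
      + 4 * x ^ 2 * N ^ 2 - 6 * x ^ 2 * N := by
  nlinarith [mul_nonneg hx (sq_nonneg N), mul_nonneg (mul_nonneg hx hx) (sq_nonneg N),
    mul_pos (sub_pos.2 hN) (sub_pos.2 hN), mul_nonneg hx (sub_pos.2 hN).le]

namespace Fid

def abelSum (n h : ℕ) : ℚ :=
  ∑ k ∈ range h, (n.choose k : ℚ) / (((n : ℚ) - 2 * k) * ((n : ℚ) - 2 * k - 2))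

def abelBound (n h : ℕ) : ℚ :=
  ((h : ℚ) + 1) * n.choose h /
    (((n : ℚ) - 2 * h) * (((n : ℚ) - 2 * h) ^ 2 - ((n : ℚ) - 2 * h) + 2 * h + 2))

lemma abelSum_succ (n h : ℕ) :
    abelSum n (h + 1)
      = abelSum n h + n.choose h / (((n : ℚ) - 2 * h) * ((n : ℚ) - 2 * h - 2)) :=
  sum_range_succ _ _

lemma eq_one_sub_abelSum (n h : ℕ) (hh : 2 * h < n) :
    Fid n h = 1 - ((n : ℚ) - 2 * h) * abelSum n h / n.choose h := by
  have hC : (n.choose h : ℚ) ≠ 0 := by exact_mod_cast (Nat.choose_pos (by omega)).ne'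
  have hN : (n : ℚ) - 2 * h ≠ 0 := (lt_sub_two_mul_of_lt (m := 0) (by omega)).ne'
  set w : ℕ → ℚ := fun k => ((n : ℚ) - k - h) / ((n : ℚ) - 2 * k)
  have hw_succ : ∀ k ∈ range h, (w (k + 1) - w k) * n.choose k
      = ((n : ℚ) - 2 * h) * (n.choose k / (((n : ℚ) - 2 * k) * ((n : ℚ) - 2 * k - 2))) := by
    intro k hk
    have := lt_sub_two_mul_of_lt (m := 2) (by have := mem_range.1 hk; omega : 2 * k + 2 < n)
    push_cast at this
    simp only [w]
    push_cast
    rw [div_sub_div _ _ (by linarith) (by linarith)]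
    field_simp
    ring
  have hw_last : w h = 1 := by
    simp only [w]
    rw [sub_sub, ← two_mul, div_self hN]
  have hsum : ∑ k ∈ range (h + 1), w k * (ch n k - ch n ((k : ℤ) - 1))
      = n.choose h - ((n : ℚ) - 2 * h) * abelSum n h := by
    have := sum_range_by_parts w (fun k => ch n k - ch n ((k : ℤ) - 1)) (h + 1)
    simp only [smul_eq_mul, add_tsub_cancel_right, sum_range_ch_sub] at this
    rw [this, sum_congr rfl hw_succ, ← mul_sum, hw_last, one_mul, abelSum]
  calc Fid n h = (∑ k ∈ range (h + 1), w k * (ch n k - ch n ((k : ℤ) - 1))) / n.choose h := by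
        rw [Fid, sum_div]
        exact sum_congr rfl fun k _ => by ring
    _ = _ := by rw [hsum, sub_div, div_self hC]

lemma abelBound_add_le_abelBound_succ (n h : ℕ) (hh : 2 * h + 2 < n) :
    abelBound n h + n.choose h / (((n : ℚ) - 2 * h) * ((n : ℚ) - 2 * h - 2))
      ≤ abelBound n (h + 1) := by
  have hC : (0 : ℚ) < n.choose h := by exact_mod_cast Nat.choose_pos (by omega)
  have hN := lt_sub_two_mul_of_lt hh
  have hx : (0 : ℚ) ≤ h := h.cast_nonneg
  unfold abelBound
  rw [cast_choose_succ_right n h (by omega)]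
  push_cast at hN ⊢
  rw [show (n : ℚ) - 2 * (h + 1) = n - 2 * h - 2 by ring, show (n : ℚ) - h = n - 2 * h + h by ring]
  generalize (n : ℚ) - 2 * h = N at hN ⊢
  generalize (h : ℚ) = x at hx ⊢
  generalize (n.choose h : ℚ) = C at hC ⊢
  have hN2 : 0 < N - 2 := by linarith
  have hA : 0 < N ^ 2 - N + 2 * x + 2 := by nlinarith
  have hA' : 0 < (N - 2) ^ 2 - (N - 2) + 2 * (x + 1) + 2 := by nlinarith
  rw [← sub_nonneg]
  have hdiff : (x + 1 + 1) * (C * (N + x) / (x + 1))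
        / ((N - 2) * ((N - 2) ^ 2 - (N - 2) + 2 * (x + 1) + 2))
      - ((x + 1) * C / (N * (N ^ 2 - N + 2 * x + 2)) + C / (N * (N - 2)))
      = C * (N ^ 4 + 3 * N ^ 3 - 6 * N ^ 2 + 5 * x * N ^ 3 - 3 * x * N ^ 2 - 6 * x * N
          + 4 * x ^ 2 * N ^ 2 - 6 * x ^ 2 * N)
        / ((x + 1) * N * (N - 2) * (N ^ 2 - N + 2 * x + 2)
          * ((N - 2) ^ 2 - (N - 2) + 2 * (x + 1) + 2)) := by
    rw [mul_div_assoc', div_div, div_add_div _ _ (by positivity) (by positivity),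
      div_sub_div _ _ (by positivity) (by positivity), div_eq_div_iff (by positivity) (by positivity)]
    ring
  rw [hdiff]
  exact div_nonneg (mul_nonneg hC.le (quartic_nonneg hx hN)) (by positivity)

lemma abelSum_lt_abelBound (n h : ℕ) (hh : 2 * h + 2 < n) : abelSum n h < abelBound n h := by
  induction h with
  | zero =>
    have hn : (2 : ℚ) < n := by exact_mod_cast (by omega : 2 < n)
    have : 0 < (n : ℚ) ^ 2 - n + 2 := by nlinarith
    simp only [abelSum, abelBound, range_zero, sum_empty, CharP.cast_eq_zero, zero_add,
      Nat.choose_zero_right, Nat.cast_one, mul_one, mul_zero, sub_zero, add_zero]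
    positivity
  | succ h ih =>
    calc abelSum n (h + 1)
        = abelSum n h + n.choose h / (((n : ℚ) - 2 * h) * ((n : ℚ) - 2 * h - 2)) :=
          abelSum_succ n h
      _ < abelBound n h + n.choose h / (((n : ℚ) - 2 * h) * ((n : ℚ) - 2 * h - 2)) := by
          gcongr
          exact ih (by omega)
      _ ≤ abelBound n (h + 1) := abelBound_add_le_abelBound_succ n h (by omega)

lemma succ_lt (n h : ℕ) (hh : 2 * (h + 1) < n) : Fid n (h + 1) < Fid n h := by
  have hC : (0 : ℚ) < n.choose h := by exact_mod_cast Nat.choose_pos (by omega)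
  have hN := lt_sub_two_mul_of_lt (m := 2) (by omega : 2 * h + 2 < n)
  have hx : (0 : ℚ) ≤ h := h.cast_nonneg
  have hT := abelSum_lt_abelBound n h (by omega)
  rw [eq_one_sub_abelSum n h (by omega), eq_one_sub_abelSum n (h + 1) hh, abelSum_succ,
    cast_choose_succ_right n h (by omega)]
  unfold abelBound at hT
  push_cast at hN ⊢
  rw [show (n : ℚ) - 2 * (h + 1) = n - 2 * h - 2 by ring, show (n : ℚ) - h = n - 2 * h + h by ring]
  generalize (n : ℚ) - 2 * h = N at hN hT ⊢
  generalize (h : ℚ) = x at hx hT ⊢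
  generalize (n.choose h : ℚ) = C at hC hT ⊢
  generalize abelSum n h = T at hT ⊢
  rw [lt_div_iff₀ (by nlinarith)] at hT
  have hdiff : (1 - N * T / C) - (1 - (N - 2) * (T + C / (N * (N - 2))) / (C * (N + x) / (x + 1)))
      = ((x + 1) * C - T * (N * (N ^ 2 - N + 2 * x + 2))) / (N * C * (N + x)) := by
    have : N - 2 ≠ 0 := by linarith
    field_simp
    ring
  have := div_pos (sub_pos.2 hT) (by positivity : 0 < N * C * (N + x))
  linarith

end Fid

theorem fid_strict_anti_general (n : ℕ) :
    ∀ h₁ h₂ : ℕ, h₁ < h₂ → h₂ ≤ (n - 1) / 2 → Fid n h₂ < Fid n h₁ := by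
  intro h₁ h₂ hlt hle
  have hanti : StrictAntiOn (Fid n) (Set.Iic ((n - 1) / 2)) :=
    strictAntiOn_Iic_of_succ_lt fun m hm => Fid.succ_lt n m (by omega)
  exact hanti (Set.mem_Iic.2 (by omega)) hle hlt

/-- For odd `n ≥ 3`, the majority-vote fidelity `F_n(h)` is strictly
decreasing in `h` on `{0, 1, …, (n-1)/2}`. -/
theorem fid_strict_anti (n : ℕ) (hn : Odd n) (hn3 : 3 ≤ n) :
    ∀ h₁ h₂ : ℕ, h₁ < h₂ → h₂ ≤ (n - 1) / 2 → Fid n h₂ < Fid n h₁ :=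
  fid_strict_anti_general n
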